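/- For real x ≠ 0 and all n ≥ 1, the Oresme polynomial admits the explicit expansion O_n(x) = ∑_{j=0}^{⌊(n−1)/2⌋} (−1)^j · C(n−j−1, j) · x^{−2j−1}, where C denotes the binomial coefficient. -/

import Mathlib

noncomputable def oresme : ℕ → ℝ → ℝ
  | 0 => fun _ => 0
  | 1 => fun x => 1/x
  | (n+2) => fun x => oresme (n+1) x - (1/x^2) * oresme n x

/-!
The sums `S n = ∑_{i + j = n} C(i, j) c^j` satisfy `S (n + 2) = S (n + 1) + c * S n` by Pascal's
rule, so every sequence with `f 0 = 0` and this recurrence is `f (n + 1) = f 1 * S n`. Oresme's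
recurrence is the case `c = -x⁻²`, `f 1 = x⁻¹`; discarding the vanishing terms `C(n - j, j)` with
`2j > n` leaves the stated range of summation.
-/

open Finset

section Recurrence

variable {R : Type*} [CommSemiring R]

theorem sum_antidiagonal_choose_mul_pow_add_two (c : R) (n : ℕ) :
    ∑ p ∈ antidiagonal (n + 2), (p.1.choose p.2 : R) * c ^ p.2 =
      ∑ p ∈ antidiagonal (n + 1), (p.1.choose p.2 : R) * c ^ p.2 +
        c * ∑ p ∈ antidiagonal n, (p.1.choose p.2 : R) * c ^ p.2 := by
  rw [Nat.antidiagonal_succ_succ', Nat.antidiagonal_succ']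
  simp only [sum_cons, sum_map, Function.Embedding.coe_prodMap, Function.Embedding.coeFn_mk,
    Function.Embedding.refl_apply, Prod.map_fst, Prod.map_snd, Nat.choose_succ_succ,
    Nat.choose_zero_right, Nat.choose_zero_succ, Nat.cast_zero, zero_mul, Nat.cast_add, add_mul,
    sum_add_distrib, mul_sum, pow_succ', mul_left_comm c]
  ring

theorem apply_succ_eq_mul_sum_antidiagonal_choose (f : ℕ → R) (c : R) (h0 : f 0 = 0)
    (hrec : ∀ n, f (n + 2) = f (n + 1) + c * f n) :
    ∀ n, f (n + 1) = f 1 * ∑ p ∈ antidiagonal n, (p.1.choose p.2 : R) * c ^ p.2 :=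
  Nat.twoStepInduction (by simp) (by simp [Nat.antidiagonal_succ, hrec, h0]) fun n h1 h2 => by
    rw [hrec, h1, h2, sum_antidiagonal_choose_mul_pow_add_two]
    ring

theorem sum_antidiagonal_choose_mul_pow_eq_sum_range (c : R) (n : ℕ) :
    ∑ p ∈ antidiagonal n, (p.1.choose p.2 : R) * c ^ p.2 =
      ∑ j ∈ range (n / 2 + 1), ((n - j).choose j : R) * c ^ j := by
  rw [← Nat.sum_antidiagonal_swap]
  simp only [Prod.fst_swap, Prod.snd_swap]
  rw [Nat.sum_antidiagonal_eq_sum_range_succ (fun i j => ((j.choose i : ℕ) : R) * c ^ i)]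
  symm
  refine sum_subset (range_subset_range.2 (by omega)) fun j hj hj' => ?_
  simp only [mem_range] at hj hj'
  rw [Nat.choose_eq_zero_of_lt (by omega), Nat.cast_zero, zero_mul]

end Recurrence

theorem zpow_neg_two_mul_sub_one {α : Type*} [DivisionMonoid α] (x : α) (j : ℕ) :
    x ^ (-(2 * (j : ℤ)) - 1) = x⁻¹ * (x⁻¹ ^ 2) ^ j := by
  rw [show -(2 * (j : ℤ)) - 1 = -((2 * j + 1 : ℕ) : ℤ) by push_cast; ring, zpow_neg,
    zpow_natCast, ← inv_pow, pow_succ', pow_mul]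

theorem oresme_add_two (n : ℕ) (x : ℝ) :
    oresme (n + 2) x = oresme (n + 1) x + -(x⁻¹ ^ 2) * oresme n x := by
  simp [oresme, sub_eq_add_neg]

theorem oresme_succ_eq_inv_mul_sum (x : ℝ) (n : ℕ) :
    oresme (n + 1) x =
      x⁻¹ * ∑ p ∈ antidiagonal n, (p.1.choose p.2 : ℝ) * (-(x⁻¹ ^ 2)) ^ p.2 := by
  rw [apply_succ_eq_mul_sum_antidiagonal_choose (oresme · x) _ rfl (oresme_add_two · x) n]
  simp [oresme]

theorem oresme_explicit_general (x : ℝ) (n : ℕ) (hn : 1 ≤ n) :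
    oresme n x = ∑ j ∈ Finset.range ((n-1)/2 + 1),
      (-1 : ℝ)^j * (Nat.choose (n-j-1) j : ℝ) * x^(-(2*(j:ℤ))-1) := by
  obtain ⟨m, rfl⟩ := Nat.exists_eq_add_of_le' hn
  rw [oresme_succ_eq_inv_mul_sum, sum_antidiagonal_choose_mul_pow_eq_sum_range, mul_sum,
    Nat.add_sub_cancel]
  refine sum_congr rfl fun j _ => ?_
  rw [show m + 1 - j - 1 = m - j by omega, zpow_neg_two_mul_sub_one, neg_pow]
  ring

theorem oresme_explicit (x : ℝ) (hx : x ≠ 0) (n : ℕ) (hn : 1 ≤ n) :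
    oresme n x = ∑ j ∈ Finset.range ((n-1)/2 + 1),
      (-1 : ℝ)^j * (Nat.choose (n-j-1) j : ℝ) * x^(-(2*(j:ℤ))-1) :=
  oresme_explicit_general x n hn
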